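/- For every m ∈ {1, …, r}, the set ℋ_m ⊆ 𝓑 has exactly (r−1)! elements and is a diagonal basis. -/

import Mathlib

open scoped BigOperators

attribute [local instance] Classical.propDecidable

noncomputable section

namespace Verlinde


variable {r : ℕ}

/-- The root `α^{ij} = e_i - e_j`, viewed as the linear functional `x_i - x_j`. -/
def stdRoot (r : ℕ) (i j : Fin r) : Fin r → ℝ :=
  fun t => (if t = i then 1 else 0) - (if t = j then 1 else 0)

/-- `B ∈ 𝓑`: an ordered tuple of roots forming a linear basis of
`V* = {a : ∑ i, a i = 0}`. -/
def IsOB (r : ℕ) (B : Fin (r - 1) → Fin r → ℝ) : Prop :=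
  (∀ m, ∃ i j, i ≠ j ∧ B m = stdRoot r i j) ∧
    LinearIndependent ℝ B ∧
    ∀ a : Fin r → ℝ, (∑ i, a i) = 0 → a ∈ Submodule.span ℝ (Set.range B)

/-- Coordinates of `a` with respect to the tuple `B` (junk unless such
coordinates exist; they are unique when `B` is linearly independent). -/
def coordsOf (B : Fin (r - 1) → Fin r → ℝ) (a : Fin r → ℝ) : Fin (r - 1) → ℝ :=
  if h : ∃ c : Fin (r - 1) → ℝ, a = ∑ j, c j • B j then h.choose else 0

/-- The integer part `[a]_B ∈ Λ`. -/
def intPart (B : Fin (r - 1) → Fin r → ℝ) (a : Fin r → ℝ) : Fin r → ℝ :=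
  ∑ j, (⌊coordsOf B a j⌋ : ℝ) • B j

/-- The fractional part `{a}_B`. -/
def fracPart (B : Fin (r - 1) → Fin r → ℝ) (a : Fin r → ℝ) : Fin r → ℝ :=
  a - intPart B a

/-- `a ∈ V*` is regular if all its `B`-coordinates are non-integral, for every `B ∈ 𝓑`,
i.e. `{a}_B ∈ ∑_j (0,1)·β^{[j]}` for every `B ∈ 𝓑`. -/
def IsRegular (r : ℕ) (a : Fin r → ℝ) : Prop :=
  ∀ B, IsOB r B → ∀ j, Int.fract (coordsOf B a j) ≠ 0

/-- The flag `Fl(B)`: `Fl(B) j = span (β^{[j]}, …, β^{[r-1]})`. -/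
def flagOf (B : Fin (r - 1) → Fin r → ℝ) : Fin (r - 1) → Submodule ℝ (Fin r → ℝ) :=
  fun j => Submodule.span ℝ {x | ∃ i, j ≤ i ∧ B i = x}

/-- `B ⊣ C`. -/
def Dashv (B C : Fin (r - 1) → Fin r → ℝ) : Prop :=
  ∀ τ : Equiv.Perm (Fin (r - 1)), flagOf (B ∘ τ) ≠ flagOf C

/-- A diagonal basis: a subset of `𝓑` of cardinality `(r-1)!` any two distinct
members of which satisfy `B ⊣ C`. -/
def IsDiagonalBasis (r : ℕ) (D : Finset (Fin (r - 1) → Fin r → ℝ)) : Prop :=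
  D.card = (r - 1).factorial ∧ (∀ B ∈ D, IsOB r B) ∧
    ∀ B ∈ D, ∀ C ∈ D, B ≠ C → Dashv B C

/-- The index of the last coordinate (`r` in `1`-indexed notation). -/
def lastI (r : ℕ) (h : 0 < r) : Fin r := ⟨r - 1, by omega⟩

/-- `ρ = ((r-1)/2, (r-3)/2, …, (1-r)/2)`. -/
def rho (r : ℕ) : Fin r → ℝ := fun i => ((r : ℝ) - 1) / 2 - (i : ℝ)

/-- `σ · a`, where `(σ·a)_i = a_{σ⁻¹ i}`. -/
def permVec (σ : Equiv.Perm (Fin r)) (a : Fin r → ℝ) : Fin r → ℝ := fun i => a (σ⁻¹ i)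

/-- A nontrivial (ordered) partition `Π = (Π′, Π″)`, encoded by `Π′ = P`:
both parts nonempty and `r ∈ Π″`. -/
def NontrivPart (r : ℕ) (h : 0 < r) (P : Finset (Fin r)) : Prop :=
  P.Nonempty ∧ lastI r h ∉ P

/-- The wall `S_{Π,l} ⊆ V*`. -/
def wallSet (r : ℕ) (P : Finset (Fin r)) (l : ℤ) : Set (Fin r → ℝ) :=
  {c | (∑ i, c i) = 0 ∧ (∑ i ∈ P, c i) = (l : ℝ)}

/-- The simplex `Δ` of admissible parabolic weights. -/
def DeltaSet (r : ℕ) (h : 0 < r) : Set (Fin r → ℝ) :=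
  {c | (∑ i, c i) = 0 ∧ (∀ i j : Fin r, i < j → c j < c i) ∧
    c ⟨0, h⟩ - c (lastI r h) < 1}

/-- The chamber of a (regular) point `c ∈ V*`. -/
def chamberOf (r : ℕ) (c : Fin r → ℝ) : Set (Fin r → ℝ) :=
  {b | (∑ i, b i) = 0 ∧ IsRegular r b ∧ ∀ B, IsOB r B → intPart B b = intPart B c}

/-- `{i,j}` is an edge of `Tree(B)`. -/
def IsTreeEdge (B : Fin (r - 1) → Fin r → ℝ) (i j : Fin r) : Prop :=
  ∃ m, B m = stdRoot r i j ∨ B m = stdRoot r j i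

/-- `B` splits along the partition `Π` (with `Π′ = P`): exactly one edge of
`Tree(B)` joins `Π′` and `Π″`. -/
def SplitsAlong (B : Fin (r - 1) → Fin r → ℝ) (P : Finset (Fin r)) : Prop :=
  ∃! pr : Fin r × Fin r, pr.1 ∈ P ∧ pr.2 ∉ P ∧ IsTreeEdge B pr.1 pr.2

/-- The linking root `β_link = α^{pq}` with `p ∈ Π′`, `q ∈ Π″`. -/
def betaLink (B : Fin (r - 1) → Fin r → ℝ) (P : Finset (Fin r)) : Fin r → ℝ :=
  if h : ∃ pr : Fin r × Fin r, pr.1 ∈ P ∧ pr.2 ∉ P ∧ IsTreeEdge B pr.1 pr.2 then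
    stdRoot r h.choose.1 h.choose.2
  else 0


/-- The Hamiltonian ordered basis `H(σ) = (α^{σ(r−1),σ(r)}, …, α^{σ(1),σ(2)})`
(indices written `0`-based). -/
def ham (r : ℕ) (σ : Equiv.Perm (Fin r)) : Fin (r - 1) → Fin r → ℝ :=
  fun j => stdRoot r (σ ⟨r - 2 - (j : ℕ), by have := j.isLt; omega⟩)
    (σ ⟨r - 1 - (j : ℕ), by have := j.isLt; omega⟩)

/-- `ℋ_m = {H(σ) : σ(1) = m}`. -/
def hamSet (r : ℕ) (h : 0 < r) (m : Fin r) : Finset (Fin (r - 1) → Fin r → ℝ) :=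
  (Finset.univ.filter fun σ : Equiv.Perm (Fin r) => σ ⟨0, h⟩ = m).image (ham r)

/-! With 0-based indices, the chain roots `α^{σ(k),σ(k+1)}` of a permutation `σ` have the
partial sums `a ↦ ∑_{s ≤ t} a_{σ(s)}` as dual functionals, so they form a basis of `V*`, and the
root `α^{σ(u),σ(w)} = ∑_{u ≤ t < w} α^{σ(t),σ(t+1)}` lies in the span of a set of chain roots only
if that set contains all of `[u, w)`. Level `r-2-n` of the flag of `H(σ')` is spanned by the chain
roots of `σ'` of index `≤ n`. If it is also spanned by `n+1` chain roots of `σ`, and `σ'` agrees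
with `σ` on `[0, n]`, then `α^{σ(n),σ'(n+1)}` forces `σ'(n+1) = σ(n+1)`. Starting from
`σ(0) = σ'(0)`, induction on `n` shows that a reordering of `H(σ)` has the flag of `H(σ')` only
if `σ = σ'`. For the trivial reordering this makes `σ ↦ H(σ)` injective on `{σ(0) = m}`, which has
`(r-1)!` elements. -/

def coordSum (r : ℕ) : (Fin r → ℝ) →ₗ[ℝ] ℝ := ∑ i, LinearMap.proj i

lemma coordSum_apply (a : Fin r → ℝ) : coordSum r a = ∑ i, a i := by
  simp [coordSum]

lemma coordSum_stdRoot (i j : Fin r) : coordSum r (stdRoot r i j) = 0 := by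
  simp [coordSum_apply, stdRoot, Finset.sum_sub_distrib]

def chainRoot (σ : Equiv.Perm (Fin r)) (k : Fin (r - 1)) : Fin r → ℝ :=
  stdRoot r (σ ⟨k, by omega⟩) (σ ⟨k + 1, by omega⟩)

lemma ham_eq_chainRoot_comp_rev (σ : Equiv.Perm (Fin r)) : ham r σ = chainRoot σ ∘ Fin.rev := by
  funext j
  simp only [ham, chainRoot, Function.comp_apply, Fin.val_rev]
  congr 3 <;> omega

def partialSum (σ : Equiv.Perm (Fin r)) (t : ℕ) : (Fin r → ℝ) →ₗ[ℝ] ℝ :=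
  ∑ s ∈ Finset.univ.filter (fun s : Fin r => (s : ℕ) ≤ t), LinearMap.proj (σ s)

lemma partialSum_stdRoot (σ : Equiv.Perm (Fin r)) (t : ℕ) (u w : Fin r) :
    partialSum σ t (stdRoot r (σ u) (σ w)) =
      (if (u : ℕ) ≤ t then 1 else 0) - (if (w : ℕ) ≤ t then 1 else 0) := by
  simp [partialSum, stdRoot, Finset.sum_sub_distrib, σ.injective.eq_iff]

lemma partialSum_chainRoot_of_ne (σ : Equiv.Perm (Fin r)) {t k : Fin (r - 1)} (h : k ≠ t) :
    partialSum σ t (chainRoot σ k) = 0 := by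
  rw [chainRoot, partialSum_stdRoot]
  have : (k : ℕ) ≠ t := Fin.val_ne_of_ne h
  split_ifs <;> simp_all <;> omega

lemma mem_of_stdRoot_mem_span_chainRoot {σ : Equiv.Perm (Fin r)} {u w : Fin r}
    {K : Set (Fin (r - 1))} (h : stdRoot r (σ u) (σ w) ∈ Submodule.span ℝ (chainRoot σ '' K))
    {t : Fin (r - 1)} (hut : (u : ℕ) ≤ t) (htw : (t : ℕ) < w) : t ∈ K := by
  by_contra ht
  have hker : Submodule.span ℝ (chainRoot σ '' K) ≤ LinearMap.ker (partialSum σ t) := by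
    rw [Submodule.span_le]
    rintro _ ⟨k, hk, rfl⟩
    exact partialSum_chainRoot_of_ne σ (ne_of_mem_of_not_mem hk ht)
  have := hker h
  simp [partialSum_stdRoot, hut, htw.not_ge] at this

lemma linearIndependent_chainRoot (σ : Equiv.Perm (Fin r)) :
    LinearIndependent ℝ (chainRoot σ) := by
  rw [linearIndependent_iff_notMem_span]
  intro t ht
  have := mem_of_stdRoot_mem_span_chainRoot ht (u := ⟨t, by omega⟩) (w := ⟨t + 1, by omega⟩)
    le_rfl (Nat.lt_succ_self t)
  simp at this

lemma span_range_chainRoot (hr : 0 < r) (σ : Equiv.Perm (Fin r)) :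
    Submodule.span ℝ (Set.range (chainRoot σ)) = LinearMap.ker (coordSum r) := by
  have hne : coordSum r ≠ 0 := fun h => by
    simpa [coordSum_apply] using LinearMap.congr_fun h (Pi.single ⟨0, hr⟩ 1)
  refine Submodule.eq_of_le_of_finrank_le ?_ ?_
  · rw [Submodule.span_le]
    rintro _ ⟨k, rfl⟩
    exact coordSum_stdRoot _ _
  · have := Module.Dual.finrank_ker_add_one_of_ne_zero hne
    rw [finrank_span_eq_card (linearIndependent_chainRoot σ)]
    simp only [Module.finrank_fin_fun, Fintype.card_fin] at this ⊢
    omega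

lemma isOB_ham (hr : 0 < r) (σ : Equiv.Perm (Fin r)) : IsOB r (ham r σ) := by
  refine ⟨fun j => ⟨_, _, σ.injective.ne ?_, rfl⟩, ?_, fun a ha => ?_⟩
  · simp only [ne_eq, Fin.mk.injEq]
    omega
  · rw [ham_eq_chainRoot_comp_rev]
    exact (linearIndependent_chainRoot σ).comp _ Fin.rev_injective
  · rw [ham_eq_chainRoot_comp_rev, Fin.rev_surjective.range_comp, span_range_chainRoot hr,
      LinearMap.mem_ker, coordSum_apply, ha]

lemma chainRoot_mem_flagOf_ham (σ : Equiv.Perm (Fin r)) {j k : Fin (r - 1)} (hk : k ≤ Fin.rev j) :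
    chainRoot σ k ∈ flagOf (ham r σ) j :=
  Submodule.subset_span ⟨Fin.rev k, Fin.le_rev_iff.1 hk, by
    rw [ham_eq_chainRoot_comp_rev, Function.comp_apply, Fin.rev_rev]⟩

lemma flagOf_ham_comp (σ : Equiv.Perm (Fin r)) (τ : Equiv.Perm (Fin (r - 1))) (j : Fin (r - 1)) :
    flagOf (ham r σ ∘ τ) j =
      Submodule.span ℝ (chainRoot σ '' ↑((Finset.Ici j).image (Fin.rev ∘ τ))) := by
  rw [Finset.coe_image, Finset.coe_Ici, ← Set.image_comp, ← Function.comp_assoc,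
    ← ham_eq_chainRoot_comp_rev]
  rfl

lemma apply_succ_eq_of_chainRoot_mem_span {σ σ' : Equiv.Perm (Fin r)} {n : ℕ} (hn : n + 1 < r)
    (hagree : ∀ s : Fin r, (s : ℕ) ≤ n → σ' s = σ s) {K : Finset (Fin (r - 1))}
    (hK : K.card ≤ n + 1)
    (hspan : ∀ k : Fin (r - 1), (k : ℕ) ≤ n → chainRoot σ' k ∈ Submodule.span ℝ (chainRoot σ '' K)) :
    σ' ⟨n + 1, hn⟩ = σ ⟨n + 1, hn⟩ := by
  set w := σ.symm (σ' ⟨n + 1, hn⟩)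
  have hw : σ w = σ' ⟨n + 1, hn⟩ := σ.apply_symm_apply _
  have hnw : n < w := by
    by_contra! hwle
    have : (w : ℕ) = n + 1 := congrArg Fin.val (σ'.injective ((hagree w hwle).trans hw))
    omega
  have hbelow : ∀ t : Fin (r - 1), (t : ℕ) < w → t ∈ K := by
    intro t htw
    rcases lt_or_ge (t : ℕ) n with htn | hnt
    · have h := hspan t htn.le
      rw [chainRoot, hagree _ htn.le, hagree ⟨t + 1, by omega⟩ htn] at h
      exact mem_of_stdRoot_mem_span_chainRoot h le_rfl (Nat.lt_succ_self t)
    · have h := hspan ⟨n, by omega⟩ le_rfl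
      rw [chainRoot, hagree _ le_rfl, ← hw] at h
      exact mem_of_stdRoot_mem_span_chainRoot h hnt htw
  have hwn : (w : ℕ) ≤ n + 1 := by
    have hsub : Finset.range w ⊆ K.map Fin.valEmbedding := fun t ht => by
      rw [Finset.mem_range] at ht
      exact Finset.mem_map.2 ⟨⟨t, by omega⟩, hbelow _ ht, rfl⟩
    simpa using (Finset.card_le_card hsub).trans ((Finset.card_map _).trans_le hK)
  have hw' : w = ⟨n + 1, hn⟩ := Fin.ext (le_antisymm hwn hnw)
  rw [← hw, hw']

lemma eq_of_flagOf_ham_comp_eq (hr : 0 < r) {σ σ' : Equiv.Perm (Fin r)}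
    (h0 : σ ⟨0, hr⟩ = σ' ⟨0, hr⟩) (τ : Equiv.Perm (Fin (r - 1)))
    (hflag : flagOf (ham r σ ∘ τ) = flagOf (ham r σ')) : σ = σ' := by
  suffices h : ∀ n : ℕ, ∀ s : Fin r, (s : ℕ) ≤ n → σ' s = σ s from
    (Equiv.ext fun s => h _ s le_rfl).symm
  intro n
  induction n with
  | zero =>
    intro s hs
    obtain rfl : s = ⟨0, hr⟩ := Fin.ext (Nat.le_zero.1 hs)
    exact h0.symm
  | succ n ih =>
    intro s hs
    rcases Nat.lt_or_ge (s : ℕ) (n + 1) with hsn | hsn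
    · exact ih s (by omega)
    have hn : n + 1 < r := by omega
    obtain rfl : s = ⟨n + 1, hn⟩ := Fin.ext (le_antisymm hs hsn)
    set j := Fin.rev (⟨n, by omega⟩ : Fin (r - 1))
    refine apply_succ_eq_of_chainRoot_mem_span _ ih (K := (Finset.Ici j).image (Fin.rev ∘ τ)) ?_
      fun k hk => ?_
    · refine Finset.card_image_le.trans ?_
      simp only [Fin.card_Ici, j, Fin.val_rev]
      omega
    · rw [← flagOf_ham_comp, hflag]
      exact chainRoot_mem_flagOf_ham σ' (by simpa [j, Fin.le_def] using hk)

lemma card_filter_perm_apply_zero (hr : 0 < r) (m : Fin r) :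
    (Finset.univ.filter fun σ : Equiv.Perm (Fin r) => σ ⟨0, hr⟩ = m).card = (r - 1).factorial := by
  obtain ⟨n, rfl⟩ : ∃ n, r = n + 1 := ⟨r - 1, by omega⟩
  have himage : (Finset.univ.filter fun σ : Equiv.Perm (Fin (n + 1)) => σ ⟨0, hr⟩ = m) =
      Finset.univ.image fun e => Equiv.Perm.decomposeFin.symm (m, e) := by
    ext σ
    simp only [Finset.mem_filter, Finset.mem_univ, true_and, Finset.mem_image]
    constructor
    · rintro rfl
      refine ⟨(Equiv.Perm.decomposeFin σ).2, ?_⟩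
      have h1 : (Equiv.Perm.decomposeFin σ).1 = σ ⟨0, hr⟩ := by
        conv_rhs => rw [← Equiv.Perm.decomposeFin.symm_apply_apply σ]
        exact (Equiv.Perm.decomposeFin_symm_apply_zero _ _).symm
      rw [← h1, Prod.mk.eta, Equiv.symm_apply_apply]
    · rintro ⟨e, rfl⟩
      exact Equiv.Perm.decomposeFin_symm_apply_zero _ _
  rw [himage, Finset.card_image_of_injective _ fun e e' h => by simpa using h]
  simp [Fintype.card_perm]

/-- Each `ℋ_m` has `(r−1)!` elements and is a diagonal basis. -/
theorem hamiltonian_basis_is_diagonal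
    (r : ℕ) (hr : 2 ≤ r) (m : Fin r) :
    (hamSet r (by omega) m).card = (r - 1).factorial ∧
      IsDiagonalBasis r (hamSet r (by omega) m) := by
  have hr0 : 0 < r := by omega
  have hcard : (hamSet r hr0 m).card = (r - 1).factorial := by
    rw [hamSet, Finset.card_image_of_injOn, card_filter_perm_apply_zero]
    intro σ hσ σ' hσ' h
    simp only [Finset.coe_filter, Finset.mem_univ, true_and, Set.mem_ofPred_eq] at hσ hσ'
    exact eq_of_flagOf_ham_comp_eq hr0 (hσ.trans hσ'.symm) 1 (by rw [Equiv.Perm.coe_one,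
      Function.comp_id, h])
  refine ⟨hcard, hcard, fun B hB => ?_, fun B hB C hC hBC τ hflag => ?_⟩
  · obtain ⟨σ, -, rfl⟩ := Finset.mem_image.1 hB
    exact isOB_ham hr0 σ
  · obtain ⟨σ, hσ, rfl⟩ := Finset.mem_image.1 hB
    obtain ⟨σ', hσ', rfl⟩ := Finset.mem_image.1 hC
    simp only [Finset.mem_filter, Finset.mem_univ, true_and] at hσ hσ'
    exact hBC (congrArg (ham r) (eq_of_flagOf_ham_comp_eq hr0 (hσ.trans hσ'.symm) τ hflag))

end Verlinde
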